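/- arXiv:math-ph/9908009 — 3 statements merged into one kernel-verified Lean document; each statement's English description precedes it below -/
import Mathlib

section
/- Let η : [s,∞) → ℂ be continuously differentiable with η(s) = 0, and define the Abel operator (Lη)(t) = (1/√(-iπ)) ∫_s^t η(τ)(t-τ)^{-1/2} dτ, where 1/√(-iπ) is a fixed complex square root with (1/√(-iπ))² = 1/(-iπ). Then for all t > s, d/dt (L(Lη))(t) = i·η(t). -/
open Real MeasureTheory intervalIntegral

lemma intInt_sub_left (a b : ℝ) :
    IntervalIntegrable (fun x => (x - a) ^ (-(1/2) : ℝ)) volume a b := by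
  have h := (intervalIntegral.intervalIntegrable_rpow' (a := 0) (b := b - a)
    (r := (-(1/2) : ℝ)) (by norm_num)).comp_sub_right a
  simpa using h

lemma intInt_sub_right (a b : ℝ) :
    IntervalIntegrable (fun x => (b - x) ^ (-(1/2) : ℝ)) volume a b := by
  have h := (intervalIntegral.intervalIntegrable_rpow' (a := b - a) (b := 0)
    (r := (-(1/2) : ℝ)) (by norm_num)).comp_sub_left b
  simpa using h

lemma integral_sub_rpow (a b : ℝ) :
    ∫ x in a..b, (b - x) ^ (-(1/2) : ℝ) = 2 * (b - a) ^ ((1/2) : ℝ) := by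
  rw [intervalIntegral.integral_comp_sub_left (fun u => u ^ (-(1/2):ℝ)) b]
  rw [integral_rpow (Or.inl (by norm_num))]
  rw [sub_self, Real.zero_rpow (by norm_num)]
  norm_num
  ring

lemma rpow_neg_half_eq (x : ℝ) : x ^ (-(1/2) : ℝ) = (√x)⁻¹ := by
  rcases lt_trichotomy x 0 with h | h | h
  · rw [Real.rpow_def_of_neg h, Real.sqrt_eq_zero'.mpr h.le]
    simp only [inv_zero]
    rw [show -(1/2) * π = -(π/2) by ring, Real.cos_neg, Real.cos_pi_div_two, mul_zero]
  · simp [h, Real.zero_rpow (by norm_num : (-(1/2):ℝ) ≠ 0)]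
  · rw [Real.rpow_neg h.le, ← Real.sqrt_eq_rpow]

lemma measurable_rpow_neg_half : Measurable fun x : ℝ => x ^ (-(1/2) : ℝ) := by
  simp only [rpow_neg_half_eq]
  exact (Real.continuous_sqrt.measurable).inv

lemma beta_one_half : Complex.betaIntegral (1/2) (1/2) = (π : ℂ) := by
  have h := Complex.Gamma_mul_Gamma_eq_betaIntegral (s := (1/2 : ℂ)) (t := (1/2 : ℂ))
    (by norm_num) (by norm_num)
  rw [show (1/2 : ℂ) + 1/2 = 1 by norm_num, Complex.Gamma_one, one_mul] at h
  rw [← h, Complex.Gamma_one_half_eq, ← Complex.cpow_add _ _ (by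
    simpa using Real.pi_ne_zero)]
  norm_num

lemma beta_aux {τ t : ℝ} (h : τ < t) :
    ∫ σ in τ..t, ((((σ - τ) ^ (-(1/2) : ℝ) * (t - σ) ^ (-(1/2) : ℝ) : ℝ)) : ℂ) = (π : ℂ) := by
  have hcong : ∀ σ ∈ Set.uIcc τ t,
      ((((σ - τ) ^ (-(1/2) : ℝ) * (t - σ) ^ (-(1/2) : ℝ) : ℝ)) : ℂ)
        = ((σ : ℂ) - τ) ^ (-(1/2) : ℂ) * (((t : ℂ) - σ)) ^ (-(1/2) : ℂ) := by
    intro σ hσ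
    rw [Set.uIcc_of_le h.le] at hσ
    have h1 : (0:ℝ) ≤ σ - τ := by linarith [hσ.1]
    have h2 : (0:ℝ) ≤ t - σ := by linarith [hσ.2]
    rw [Complex.ofReal_mul, Complex.ofReal_cpow h1 _, Complex.ofReal_cpow h2 _]
    push_cast
    ring
  rw [intervalIntegral.integral_congr hcong]
  have hsub := intervalIntegral.integral_comp_add_right
    (a := 0) (b := t - τ)
    (fun σ : ℝ => ((σ : ℂ) - τ) ^ (-(1/2) : ℂ) * (((t : ℂ) - σ)) ^ (-(1/2) : ℂ)) τ
  simp only [zero_add, sub_add_cancel] at hsub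
  rw [← hsub]
  have hbs := Complex.betaIntegral_scaled (1/2) (1/2) (a := t - τ) (by linarith)
  have : ∀ x : ℝ, ((x : ℂ) + τ - τ) ^ (-(1/2) : ℂ) * ((t : ℂ) - (x + τ)) ^ (-(1/2) : ℂ)
      = (x : ℂ) ^ ((1/2 : ℂ) - 1) * (((t - τ : ℝ) : ℂ) - x) ^ ((1/2 : ℂ) - 1) := by
    intro x
    push_cast
    ring_nf
  simp only [Complex.ofReal_add] at *
  rw [intervalIntegral.integral_congr (fun x _ => this x), hbs]
  rw [show (1/2 : ℂ) + 1/2 - 1 = 0 by norm_num, Complex.cpow_zero, one_mul, beta_one_half]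

lemma key_fubini (s t : ℝ) (hst : s < t) (φ : ℝ → ℂ) (hφ : Continuous φ) :
    ∫ σ in s..t, (∫ τ in s..σ, φ τ * (((σ - τ) ^ (-(1/2) : ℝ) : ℝ) : ℂ)) *
        (((t - σ) ^ (-(1/2) : ℝ) : ℝ) : ℂ) = (π : ℂ) * ∫ τ in s..t, φ τ := by
  set μ := volume.restrict (Set.Ioc s t) with hμ
  set g : ℝ → ℝ → ℂ := fun σ τ =>
    φ τ * (((σ - τ) ^ (-(1/2) : ℝ) : ℝ) : ℂ) * (((t - σ) ^ (-(1/2) : ℝ) : ℝ) : ℂ) with hg_def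
  set f : ℝ × ℝ → ℂ := fun p => Set.indicator (Set.Ioc s p.1) (g p.1) p.2 with hf_def
  -- measurability
  have hgm : StronglyMeasurable (fun p : ℝ × ℝ => g p.1 p.2) := by
    apply Measurable.stronglyMeasurable
    exact ((hφ.measurable.comp measurable_snd).mul
      (Complex.measurable_ofReal.comp
        (measurable_rpow_neg_half.comp (measurable_fst.sub measurable_snd)))).mul
      (Complex.measurable_ofReal.comp
        (measurable_rpow_neg_half.comp (measurable_const.sub measurable_fst)))
  have hT : MeasurableSet {p : ℝ × ℝ | p.2 ∈ Set.Ioc s p.1} := by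
    have : {p : ℝ × ℝ | p.2 ∈ Set.Ioc s p.1}
        = {p : ℝ × ℝ | s < p.2} ∩ {p : ℝ × ℝ | p.2 ≤ p.1} := rfl
    rw [this]
    exact (measurableSet_lt measurable_const measurable_snd).inter
      (measurableSet_le measurable_snd measurable_fst)
  have hfm : AEStronglyMeasurable f (μ.prod μ) := by
    have hfi : f = Set.indicator {p : ℝ × ℝ | p.2 ∈ Set.Ioc s p.1}
        (fun p => g p.1 p.2) := by
      funext p
      simp only [hf_def, Set.indicator_apply, Set.mem_setOf_eq]
    rw [hfi]
    exact (hgm.indicator hT).aestronglyMeasurable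
  -- bound on φ
  obtain ⟨M, hM⟩ := isCompact_Icc.exists_bound_of_continuousOn (s := Set.Icc s t)
    hφ.continuousOn
  have hM0 : 0 ≤ M := le_trans (norm_nonneg _) (hM s (by simp [hst.le]))
  -- slice integrability
  have hKC : ∀ σ : ℝ, IntervalIntegrable (fun τ => (((σ - τ) ^ (-(1/2) : ℝ) : ℝ) : ℂ))
      volume s σ :=
    fun σ => ⟨(intInt_sub_right s σ).1.ofReal, (intInt_sub_right s σ).2.ofReal⟩
  have hslice : ∀ σ : ℝ, s ≤ σ → IntegrableOn (g σ) (Set.Ioc s σ) volume := by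
    intro σ hσ
    have h1 : IntervalIntegrable (g σ) volume s σ :=
      ((hKC σ).continuousOn_mul hφ.continuousOn).mul_const _
    exact (intervalIntegrable_iff_integrableOn_Ioc_of_le hσ).mp h1
  have hres : ∀ σ : ℝ, σ ≤ t → μ.restrict (Set.Ioc s σ) = volume.restrict (Set.Ioc s σ) := by
    intro σ h2
    rw [hμ, Measure.restrict_restrict measurableSet_Ioc]
    congr 1
    rw [Set.Ioc_inter_Ioc]
    simp [min_eq_left h2]
  have hslice' : ∀ σ : ℝ, s ≤ σ → σ ≤ t → Integrable (fun τ => f (σ, τ)) μ := by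
    intro σ h1 h2
    have he : (fun τ => f (σ, τ)) = Set.indicator (Set.Ioc s σ) (g σ) := rfl
    rw [he, integrable_indicator_iff measurableSet_Ioc, IntegrableOn, hres σ h2]
    exact hslice σ h1
  -- integrability on the product
  have hint : Integrable f (μ.prod μ) := by
    rw [integrable_prod_iff hfm]
    constructor
    · filter_upwards [ae_restrict_mem measurableSet_Ioc] with σ hσ
      exact hslice' σ hσ.1.le hσ.2
    · apply Integrable.mono'
        (g := fun σ => (2 * M * (t - s) ^ ((1/2) : ℝ)) * (t - σ) ^ (-(1/2) : ℝ))
      · have h2 := ((intervalIntegrable_iff_integrableOn_Ioc_of_le hst.le).mp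
          (intInt_sub_right s t)).const_mul (2 * M * (t - s) ^ ((1/2) : ℝ))
        exact h2
      · exact hfm.norm.integral_prod_right'
      · filter_upwards [ae_restrict_mem measurableSet_Ioc] with σ hσ
        have hnn : 0 ≤ ∫ τ, ‖f (σ, τ)‖ ∂μ := integral_nonneg fun τ => norm_nonneg _
        rw [Real.norm_of_nonneg hnn]
        have e1 : (fun τ => ‖f (σ, τ)‖)
            = Set.indicator (Set.Ioc s σ) (fun τ => ‖g σ τ‖) := by
          funext τ
          rw [show f (σ, τ) = Set.indicator (Set.Ioc s σ) (g σ) τ from rfl,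
            norm_indicator_eq_indicator_norm]
        rw [e1, MeasureTheory.integral_indicator measurableSet_Ioc, hres σ hσ.2]
        have hbd : ∫ τ in Set.Ioc s σ, ‖g σ τ‖
            ≤ ∫ τ in Set.Ioc s σ, M * ((σ - τ) ^ (-(1/2) : ℝ) * (t - σ) ^ (-(1/2) : ℝ)) := by
          apply setIntegral_mono_on ((hslice σ hσ.1.le).norm) _ measurableSet_Ioc
          · intro τ hτ
            have h1 : (0:ℝ) ≤ σ - τ := by linarith [hτ.2]
            have h2 : (0:ℝ) ≤ t - σ := by linarith [hσ.2]
            rw [hg_def]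
            simp only [norm_mul, Complex.norm_real, Real.norm_of_nonneg (Real.rpow_nonneg h1 _),
              Real.norm_of_nonneg (Real.rpow_nonneg h2 _)]
            rw [← mul_assoc]
            exact mul_le_mul_of_nonneg_right
              (mul_le_mul_of_nonneg_right
                (hM τ ⟨hτ.1.le, le_trans hτ.2 hσ.2⟩) (Real.rpow_nonneg h1 _))
              (Real.rpow_nonneg h2 _)
          · exact (((intInt_sub_right s σ).mul_const ((t - σ) ^ (-(1/2) : ℝ))).const_mul M
              |> (intervalIntegrable_iff_integrableOn_Ioc_of_le hσ.1.le).mp)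
        have hval : ∫ τ in Set.Ioc s σ, M * ((σ - τ) ^ (-(1/2) : ℝ) * (t - σ) ^ (-(1/2) : ℝ))
            = M * (t - σ) ^ (-(1/2) : ℝ) * (2 * (σ - s) ^ ((1/2) : ℝ)) := by
          simp_rw [show ∀ τ : ℝ, M * ((σ - τ) ^ (-(1/2) : ℝ) * (t - σ) ^ (-(1/2) : ℝ))
              = (M * (t - σ) ^ (-(1/2) : ℝ)) * (σ - τ) ^ (-(1/2) : ℝ) from fun τ => by ring]
          rw [MeasureTheory.integral_const_mul, ← intervalIntegral.integral_of_le hσ.1.le,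
            integral_sub_rpow s σ]
        have hmono : (σ - s) ^ ((1/2) : ℝ) ≤ (t - s) ^ ((1/2) : ℝ) :=
          Real.rpow_le_rpow (by linarith [hσ.1]) (by linarith [hσ.2]) (by norm_num)
        have h3 : (0:ℝ) ≤ (t - σ) ^ (-(1/2) : ℝ) :=
          Real.rpow_nonneg (by linarith [hσ.2]) _
        calc ∫ τ in Set.Ioc s σ, ‖g σ τ‖
            ≤ M * (t - σ) ^ (-(1/2) : ℝ) * (2 * (σ - s) ^ ((1/2) : ℝ)) := hbd.trans_eq hval
          _ ≤ 2 * M * (t - s) ^ ((1/2) : ℝ) * (t - σ) ^ (-(1/2) : ℝ) := by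
              nlinarith [mul_le_mul_of_nonneg_left hmono (mul_nonneg hM0 h3)]
  -- the three rewriting steps
  have e_lhs : (∫ σ in s..t, (∫ τ in s..σ, φ τ * (((σ - τ) ^ (-(1/2) : ℝ) : ℝ) : ℂ)) *
        (((t - σ) ^ (-(1/2) : ℝ) : ℝ) : ℂ)) = ∫ σ, (∫ τ, f (σ, τ) ∂μ) ∂μ := by
    rw [intervalIntegral.integral_of_le hst.le]
    apply setIntegral_congr_fun measurableSet_Ioc
    intro σ hσ
    show (∫ τ in s..σ, φ τ * (((σ - τ) ^ (-(1/2) : ℝ) : ℝ) : ℂ)) *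
        (((t - σ) ^ (-(1/2) : ℝ) : ℝ) : ℂ) = ∫ τ, f (σ, τ) ∂μ
    rw [← intervalIntegral.integral_mul_const, intervalIntegral.integral_of_le hσ.1.le]
    have he : (fun τ => f (σ, τ)) = Set.indicator (Set.Ioc s σ) (g σ) := rfl
    rw [he, MeasureTheory.integral_indicator measurableSet_Ioc, hres σ hσ.2]
  have e_swap : (∫ σ, (∫ τ, f (σ, τ) ∂μ) ∂μ) = ∫ τ, (∫ σ, f (σ, τ) ∂μ) ∂μ :=
    integral_integral_swap hint
  have e_rhs : (∫ τ, (∫ σ, f (σ, τ) ∂μ) ∂μ) = (π : ℂ) * ∫ τ in s..t, φ τ := by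
    rw [intervalIntegral.integral_of_le hst.le, hμ, integral_Ioc_eq_integral_Ioo,
      integral_Ioc_eq_integral_Ioo, ← MeasureTheory.integral_const_mul]
    apply setIntegral_congr_fun measurableSet_Ioo
    intro τ hτ
    show (∫ σ, f (σ, τ) ∂μ) = (π : ℂ) * φ τ
    have e2 : (fun σ => f (σ, τ)) = Set.indicator (Set.Ici τ) (fun σ => g σ τ) := by
      funext σ
      simp only [hf_def, Set.indicator_apply, Set.mem_Ioc, Set.mem_Ici]
      by_cases h : τ ≤ σ <;> simp [h, hτ.1]
    rw [e2, MeasureTheory.integral_indicator measurableSet_Ici, hμ,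
      Measure.restrict_restrict measurableSet_Ici]
    have hI : Set.Ici τ ∩ Set.Ioc s t = Set.Icc τ t := by
      ext x
      constructor
      · rintro ⟨h1, _, h3⟩; exact ⟨h1, h3⟩
      · rintro ⟨h1, h2⟩; exact ⟨h1, lt_of_lt_of_le hτ.1 h1, h2⟩
    rw [hI, integral_Icc_eq_integral_Ioc, ← intervalIntegral.integral_of_le hτ.2.le]
    have e3 : ∀ σ ∈ Set.uIcc τ t, g σ τ
        = φ τ * ((((σ - τ) ^ (-(1/2) : ℝ) * (t - σ) ^ (-(1/2) : ℝ) : ℝ)) : ℂ) := by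
      intro σ _
      rw [hg_def]
      push_cast
      ring
    rw [intervalIntegral.integral_congr e3, intervalIntegral.integral_const_mul,
      beta_aux hτ.2, mul_comm]
  rw [e_lhs, e_swap, e_rhs]

/-- If `η` is `C¹` on `[s,∞)` with `η s = 0`, and `L` is the Abel operator
`(Lη)(t) = (1/√(-iπ)) ∫_s^t η(τ) (t-τ)^{-1/2} dτ` (where `c = 1/√(-iπ)` is a fixed
complex square root of `1/(-iπ)`), then `d/dt (L(Lη))(t) = i·η(t)` for all `t > s`. -/
theorem deriv_abel_squared (s : ℝ) (η : ℝ → ℂ)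
    (hη : ContDiffOn ℝ 1 η (Set.Ici s)) (hηs : η s = 0)
    (c : ℂ) (hc : c ^ 2 = 1 / (-Complex.I * (π : ℂ)))
    (L : (ℝ → ℂ) → ℝ → ℂ)
    (hL : ∀ f : ℝ → ℂ, ∀ t : ℝ,
      L f t = c * ∫ τ in s..t, f τ * (((t - τ) ^ (-(1/2) : ℝ) : ℝ) : ℂ)) :
    ∀ t > s, HasDerivAt (L (L η)) (Complex.I * η t) t := by
  intro t ht
  have hηc : ContinuousOn η (Set.Ici s) := hη.continuousOn
  set φ : ℝ → ℂ := fun x => η (max x s) with hφdef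
  have hφc : Continuous φ := hηc.comp_continuous
    (continuous_id.max continuous_const) (fun x => Set.mem_Ici.mpr (le_max_right x s))
  have hφη : ∀ x, s ≤ x → φ x = η x := by
    intro x hx
    rw [hφdef]
    simp only [max_eq_left hx]
  have hLcong : ∀ u, s ≤ u → L η u = L φ u := by
    intro u hu
    rw [hL, hL]
    congr 1
    apply intervalIntegral.integral_congr
    intro τ hτ
    rw [Set.uIcc_of_le hu] at hτ
    show η τ * _ = φ τ * _
    rw [hφη τ hτ.1]
  have hcπ : c * c * (π : ℂ) = Complex.I := by
    rw [← sq, hc]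
    rw [div_mul_eq_mul_div, one_mul, div_eq_iff (by
      simp [Complex.I_ne_zero, Real.pi_ne_zero] : (-Complex.I * (π : ℂ)) ≠ 0)]
    have : Complex.I * (-Complex.I * (π : ℂ)) = -(Complex.I * Complex.I) * π := by ring
    rw [this, Complex.I_mul_I]
    ring
  have hkey : ∀ u, s < u → L (L η) u = Complex.I * ∫ τ in s..u, η τ := by
    intro u hu
    rw [hL]
    have hcongr : ∀ σ ∈ Set.uIcc s u, L η σ * (((u - σ) ^ (-(1/2) : ℝ) : ℝ) : ℂ)
        = c * ((∫ τ in s..σ, φ τ * (((σ - τ) ^ (-(1/2) : ℝ) : ℝ) : ℂ)) *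
          (((u - σ) ^ (-(1/2) : ℝ) : ℝ) : ℂ)) := by
      intro σ hσ
      rw [Set.uIcc_of_le hu.le] at hσ
      rw [hLcong σ hσ.1, hL, mul_assoc]
    rw [intervalIntegral.integral_congr hcongr, intervalIntegral.integral_const_mul,
      key_fubini s u hu φ hφc]
    have hφint : (∫ τ in s..u, φ τ) = ∫ τ in s..u, η τ := by
      apply intervalIntegral.integral_congr
      intro τ hτ
      rw [Set.uIcc_of_le hu.le] at hτ
      exact hφη τ hτ.1
    rw [hφint, ← mul_assoc, ← mul_assoc, hcπ]
  have hcont : ContinuousAt η t :=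
    hηc.continuousAt (Filter.mem_of_superset (isOpen_Ioi.mem_nhds ht) Set.Ioi_subset_Ici_self)
  have hii : IntervalIntegrable η volume s t :=
    (hηc.mono (by rw [Set.uIcc_of_le ht.le]; exact Set.Icc_subset_Ici_self)).intervalIntegrable
  have hmeas : StronglyMeasurableAtFilter η (nhds t) volume :=
    ⟨Set.Ioi s, isOpen_Ioi.mem_nhds ht,
      (hηc.mono Set.Ioi_subset_Ici_self).aestronglyMeasurable measurableSet_Ioi⟩
  have hd : HasDerivAt (fun u => Complex.I * ∫ τ in s..u, η τ) (Complex.I * η t) t :=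
    (intervalIntegral.integral_hasDerivAt_right hii hmeas hcont).const_mul Complex.I
  apply hd.congr_of_eventuallyEq
  filter_upwards [isOpen_Ioi.mem_nhds ht] with u hu
  exact hkey u hu
end

section
/- Let η : [s,∞) → ℂ be continuously differentiable with η(s) = 0 and define (Lη)(t) = ∫_s^t η(τ)(t-τ)^{-1/2} dτ. Then Lη is differentiable on (s,∞) and d/dt (Lη)(t) = (L η')(t), i.e. ∫_s^t η'(τ)(t-τ)^{-1/2} dτ. -/
/-!
After the substitution `τ = u - v`, `Lη(u) = ∫₀^{u-s} η(u - v) v^{-1/2} dv`. Replacing `η` by its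
extension `x ↦ η (max x s)`, which vanishes left of `s` because `η s = 0`, the range of integration
can be frozen to a fixed `(0, T]`. The extension is Lipschitz near `t`, so `v^{-1/2}` times its
Lipschitz constant dominates the difference quotients and the derivative passes under the integral.
As the derivative of the extension also vanishes left of `s`, substituting back gives `Lη'(t)`.
-/

open Real MeasureTheory intervalIntegral Set Filter Topology NNReal

variable {E : Type*} [NormedAddCommGroup E] [NormedSpace ℝ E]

theorem intervalIntegral_comp_sub_smul_eq_setIntegral_Ioc (k : ℝ → ℝ) {g : ℝ → E} {s u T : ℝ}
    (hg : ∀ x < s, g x = 0) (hsu : s ≤ u) (huT : u - s ≤ T) :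
    ∫ τ in s..u, k (u - τ) • g τ = ∫ v in Ioc 0 T, k v • g (u - v) := by
  have hsub := integral_comp_sub_left (fun v => k v • g (u - v)) (a := s) (b := u) u
  simp only [sub_sub_cancel, sub_self] at hsub
  rw [hsub, integral_of_le (sub_nonneg.2 hsu)]
  refine (setIntegral_eq_of_subset_of_forall_sdiff_eq_zero measurableSet_Ioc
    (Ioc_subset_Ioc_right huT) fun v hv => ?_).symm
  have hv' : u - s < v := not_le.1 fun h => hv.2 ⟨hv.1.1, h⟩
  rw [hg _ (by linarith), smul_zero]

theorem hasDerivAt_setIntegral_Ioc_smul_comp_sub [CompleteSpace E] {k : ℝ → ℝ} {f : ℝ → E}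
    {K : ℝ≥0} {t b T : ℝ} (htb : t < b) (hk : IntegrableOn k (Ioc 0 T))
    (hf : LipschitzOnWith K f (Iio b))
    (hdiff : ∀ᵐ v ∂volume.restrict (Ioc 0 T), DifferentiableAt ℝ f (t - v)) :
    HasDerivAt (fun x => ∫ v in Ioc 0 T, k v • f (x - v))
      (∫ v in Ioc 0 T, k v • deriv f (t - v)) t := by
  have hshift : ∀ v ∈ Ioc 0 T, ∀ x < b, x - v ∈ Iio b :=
    fun v hv x hx => show x - v < b by linarith [hv.1]
  have hf_norm := lipschitzOnWith_iff_norm_sub_le.1 hf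
  have hlip : ∀ v ∈ Ioc 0 T,
      LipschitzOnWith (nnabs (‖k v‖ * K)) (fun x => k v • f (x - v)) (Iio b) := by
    intro v hv
    refine lipschitzOnWith_iff_norm_sub_le.2 fun x hx y hy => ?_
    rw [← smul_sub, norm_smul, coe_nnabs, abs_of_nonneg (by positivity), mul_assoc]
    gcongr
    simpa using hf_norm (hshift v hv x hx) (hshift v hv y hy)
  have hbound : ∀ v ∈ Ioc 0 T, ‖f (t - v)‖ ≤ ‖f t‖ + K * T := by
    intro v hv
    have h := hf_norm (hshift v hv t htb) htb
    rw [sub_sub_cancel_left, norm_neg, Real.norm_of_nonneg hv.1.le] at h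
    calc ‖f (t - v)‖ ≤ ‖f t‖ + ‖f (t - v) - f t‖ := norm_le_norm_add_norm_sub' _ _
      _ ≤ ‖f t‖ + K * T := by gcongr; exact h.trans (by gcongr; exact hv.2)
  have hmeas : ∀ x < b, AEStronglyMeasurable (fun v => f (x - v)) (volume.restrict (Ioc 0 T)) :=
    fun x hx => (hf.continuousOn.comp (continuousOn_const.sub continuousOn_id)
      fun v hv => hshift v hv x hx).aestronglyMeasurable measurableSet_Ioc
  refine (hasDerivAt_integral_of_dominated_loc_of_lip (Iio_mem_nhds htb) ?_ ?_ ?_ ?_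
    (hk.norm.mul_const K) ?_).2
  · filter_upwards [Iio_mem_nhds htb] with x hx
    exact hk.aestronglyMeasurable.smul (hmeas x hx)
  · refine hk.smul_bdd (‖f t‖ + K * T) (hmeas t htb) ?_
    filter_upwards [ae_restrict_mem measurableSet_Ioc] with v hv using hbound v hv
  · exact hk.aestronglyMeasurable.smul ((stronglyMeasurable_deriv f).comp_measurable
      (measurable_const.sub measurable_id)).aestronglyMeasurable
  · filter_upwards [ae_restrict_mem measurableSet_Ioc] with v hv using hlip v hv
  · filter_upwards [hdiff] with v hv
    exact (hv.hasDerivAt.comp_sub_const t v).const_smul (k v)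

theorem hasDerivAt_comp_max_const_of_lt (η : ℝ → E) {s x : ℝ} (hx : x < s) :
    HasDerivAt (fun y => η (max y s)) 0 x :=
  (hasDerivAt_const x (η s)).congr_of_eventuallyEq <| by
    filter_upwards [Iio_mem_nhds hx] with y hy
    rw [max_eq_right hy.le]

theorem hasDerivAt_comp_max_const_of_gt {η : ℝ → E} {s x : ℝ}
    (hη : DifferentiableOn ℝ η (Ici s)) (hx : s < x) :
    HasDerivAt (fun y => η (max y s)) (derivWithin η (Ici s) x) x := by
  rw [derivWithin_of_mem_nhds (Ici_mem_nhds hx)]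
  refine (hη.differentiableAt (Ici_mem_nhds hx)).hasDerivAt.congr_of_eventuallyEq ?_
  filter_upwards [Ioi_mem_nhds hx] with y hy
  rw [max_eq_left hy.le]

theorem differentiableAt_comp_max_const {η : ℝ → E} {s x : ℝ}
    (hη : DifferentiableOn ℝ η (Ici s)) (hx : x ≠ s) :
    DifferentiableAt ℝ (fun y => η (max y s)) x := by
  rcases lt_or_gt_of_ne hx with h | h
  · exact (hasDerivAt_comp_max_const_of_lt η h).differentiableAt
  · exact (hasDerivAt_comp_max_const_of_gt hη h).differentiableAt

theorem ContDiffOn.exists_lipschitzOnWith_comp_max_const {η : ℝ → E} {s : ℝ}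
    (hη : ContDiffOn ℝ 1 η (Ici s)) (b : ℝ) :
    ∃ K, LipschitzOnWith K (fun y => η (max y s)) (Iic b) := by
  obtain ⟨K, hK⟩ := (hη.mono Icc_subset_Ici_self).exists_lipschitzOnWith one_ne_zero
    (convex_Icc s (max b s)) isCompact_Icc
  exact ⟨K * 1, hK.comp (LipschitzWith.id.max_const s).lipschitzOnWith
    fun y hy => ⟨le_max_right y s, max_le_max_right s hy⟩⟩

/-- If `η` is `C¹` on `[s,∞)` with `η s = 0`, then the Abel integral
`(Lη)(t) = ∫_s^t η(τ) (t-τ)^{-1/2} dτ` is differentiable on `(s,∞)` with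
`d/dt (Lη)(t) = ∫_s^t η'(τ) (t-τ)^{-1/2} dτ`. -/
theorem deriv_abel_eq_abel_deriv (s : ℝ) (η : ℝ → ℂ)
    (hη : ContDiffOn ℝ 1 η (Set.Ici s)) (hηs : η s = 0) :
    ∀ t > s, HasDerivAt (fun u : ℝ => ∫ τ in s..u, η τ * (((u - τ) ^ (-(1/2) : ℝ) : ℝ) : ℂ))
      (∫ τ in s..t, derivWithin η (Set.Ici s) τ * (((t - τ) ^ (-(1/2) : ℝ) : ℝ) : ℂ)) t := by
  intro t ht
  set k : ℝ → ℝ := fun v => v ^ (-(1/2) : ℝ)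
  set ηe : ℝ → ℂ := fun y => η (max y s)
  have hηd : DifferentiableOn ℝ η (Ici s) := hη.differentiableOn one_ne_zero
  have hk : IntegrableOn k (Ioc 0 (t + 1 - s)) :=
    (intervalIntegrable_iff_integrableOn_Ioc_of_le (by linarith)).1
      (intervalIntegrable_rpow' (by norm_num))
  have hdiff : ∀ᵐ v ∂volume.restrict (Ioc 0 (t + 1 - s)), DifferentiableAt ℝ ηe (t - v) := by
    filter_upwards [ae_restrict_of_ae ((countable_singleton (t - s)).ae_notMem volume)] with v hv
    exact differentiableAt_comp_max_const hηd fun h => hv (by rw [mem_singleton_iff]; linarith)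
  obtain ⟨K, hK⟩ := hη.exists_lipschitzOnWith_comp_max_const (t + 1)
  have hfun : ∀ u ∈ Ioo s (t + 1), (∫ τ in s..u, η τ * ((k (u - τ) : ℝ) : ℂ))
      = ∫ v in Ioc 0 (t + 1 - s), k v • ηe (u - v) := by
    intro u hu
    rw [← intervalIntegral_comp_sub_smul_eq_setIntegral_Ioc k
      (fun x hx => by simp [ηe, max_eq_right hx.le, hηs]) hu.1.le (by linarith [hu.2])]
    refine integral_congr fun τ hτ => ?_
    rw [uIcc_of_le hu.1.le] at hτ
    simp [ηe, max_eq_left hτ.1, Complex.real_smul, mul_comm]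
  have hval : (∫ τ in s..t, derivWithin η (Ici s) τ * ((k (t - τ) : ℝ) : ℂ))
      = ∫ v in Ioc 0 (t + 1 - s), k v • deriv ηe (t - v) := by
    rw [← intervalIntegral_comp_sub_smul_eq_setIntegral_Ioc k
      (fun x hx => (hasDerivAt_comp_max_const_of_lt η hx).deriv) ht.le (by linarith)]
    refine integral_congr_ae (ae_of_all _ fun τ hτ => ?_)
    rw [uIoc_of_le ht.le] at hτ
    rw [(hasDerivAt_comp_max_const_of_gt hηd hτ.1).deriv, Complex.real_smul, mul_comm]
  rw [hval]
  exact (hasDerivAt_setIntegral_Ioc_smul_comp_sub (by linarith : t < t + 1) hk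
    (hK.mono Iio_subset_Iic_self) hdiff).congr_of_eventuallyEq
    (eventually_of_mem (Ioo_mem_nhds ht (by linarith)) hfun)
end

section
/- Let y₁, …, y_n be distinct points in ℝ³, let q₁, …, q_n ∈ ℂ, and let φ : ℝ³ → ℂ be in H¹_loc(ℝ³) with |∇φ| ∈ L²(ℝ³). If φ(x) + Σ_{k=1}^n q_k /(4π|x - y_k|) = 0 for almost every x ∈ ℝ³, then q_k = 0 for all k and φ = 0 almost everywhere. -/
/-!
Away from the points `y k` the function `ψ x = -∑ q_k G(x - y_k)` is smooth, and `φ = ψ` a.e.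
A set of full measure is dense, hence a set of unique differentiability, so `∇φ = ∇ψ` wherever
both are differentiable, i.e. a.e. Near `y_j` the gradient of `ψ` is dominated by that of its
`j`-th term, of size `‖q_j‖ / (4π ‖x - y_j‖²)`; its square `‖x - y_j‖⁻⁴` is not integrable near
`y_j` in dimension `d ≤ 4`, contradicting `|∇φ| ∈ L²` unless `q_j = 0`. Once all charges vanish,
`φ = 0` a.e.
-/

open Real MeasureTheory Metric Filter Set Function
open scoped Topology

section DenseSet

variable {𝕜 E F : Type*} [NontriviallyNormedField 𝕜] [NormedAddCommGroup E] [NormedSpace 𝕜 E]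
  [NormedAddCommGroup F] [NormedSpace 𝕜 F] {f g : E → F} {s : Set E} {x : E}

theorem Dense.uniqueDiffWithinAt (hs : Dense s) (x : E) : UniqueDiffWithinAt 𝕜 s x :=
  uniqueDiffWithinAt_univ.mono_closure fun y _ => hs y

theorem fderiv_eq_of_eqOn_dense (hs : Dense s) (hfg : EqOn f g s) (hx : x ∈ s)
    (hf : DifferentiableAt 𝕜 f x) (hg : DifferentiableAt 𝕜 g x) :
    fderiv 𝕜 f x = fderiv 𝕜 g x := by
  rw [← hf.fderivWithin (hs.uniqueDiffWithinAt x), ← hg.fderivWithin (hs.uniqueDiffWithinAt x)]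
  exact fderivWithin_congr' hfg hx

theorem fderiv_ae_eq_of_ae_eq [MeasurableSpace E] {μ : Measure E} [μ.IsOpenPosMeasure]
    (hfg : f =ᵐ[μ] g) (hf : ∀ᵐ x ∂μ, DifferentiableAt 𝕜 f x)
    (hg : ∀ᵐ x ∂μ, DifferentiableAt 𝕜 g x) : fderiv 𝕜 f =ᵐ[μ] fderiv 𝕜 g := by
  filter_upwards [hfg, hf, hg] with x hx hfx hgx
  exact fderiv_eq_of_eqOn_dense (Measure.dense_of_ae hfg) (fun _ h => h) hx hfx hgx

end DenseSet

section PowerSingularity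

variable {E : Type*} [NormedAddCommGroup E] [NormedSpace ℝ E] [FiniteDimensional ℝ E]
  [MeasurableSpace E] [BorelSpace E] [Nontrivial E] (μ : Measure E) [μ.IsAddHaarMeasure]

theorem integrableOn_ball_norm_rpow_neg_iff {r α : ℝ} (hr : 0 < r) :
    IntegrableOn (fun x : E => ‖x‖ ^ (-α)) (ball 0 r) μ ↔ α < Module.finrank ℝ E := by
  rw [integrableOn_fun_norm_addHaar μ (f := fun t => t ^ (-α))]
  have hpow : EqOn (fun t : ℝ => t ^ (Module.finrank ℝ E - 1) • t ^ (-α))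
      (fun t => t ^ ((Module.finrank ℝ E : ℝ) - 1 - α)) (Ioo 0 r) := by
    intro t ht
    have hd : 1 ≤ Module.finrank ℝ E := Module.finrank_pos
    dsimp only
    rw [smul_eq_mul, ← Real.rpow_natCast, ← Real.rpow_add ht.1]
    push_cast [hd]
    ring_nf
  rw [integrableOn_congr_fun hpow measurableSet_Ioo, intervalIntegral.integrableOn_Ioo_rpow_iff hr]
  constructor <;> intro h <;> linarith

theorem integrableOn_ball_norm_sub_rpow_neg_iff (z : E) {r α : ℝ} (hr : 0 < r) :
    IntegrableOn (fun x : E => ‖x - z‖ ^ (-α)) (ball z r) μ ↔ α < Module.finrank ℝ E := by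
  rw [← integrableOn_ball_norm_rpow_neg_iff μ hr,
    ← (measurePreserving_add_right μ z).integrableOn_comp_preimage
      (measurableEmbedding_addRight z), preimage_add_right_ball, sub_self]
  simp [comp_def]

end PowerSingularity

theorem tendsto_inv_norm_sub_sq_nhdsNE {E : Type*} [NormedAddCommGroup E] (y : E) :
    Tendsto (fun x : E => (‖x - y‖ ^ 2)⁻¹) (𝓝[≠] y) atTop := by
  refine tendsto_inv_nhdsGT_zero.comp
    (tendsto_nhdsWithin_of_tendsto_nhds_of_eventually_within _ ?_ ?_)
  · exact tendsto_nhdsWithin_of_tendsto_nhds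
      (((continuous_id.sub continuous_const).norm.pow 2).tendsto' y 0 (by simp))
  · filter_upwards [self_mem_nhdsWithin] with x (hx : x ≠ y)
    exact pow_pos (norm_pos_iff.2 (sub_ne_zero.2 hx)) 2

section InverseNorm

variable {E F : Type*} [NormedAddCommGroup E] [InnerProductSpace ℝ E]
  [NormedAddCommGroup F] [NormedSpace ℝ F] {x y : E}

theorem hasFDerivAt_inv_norm (hx : x ≠ 0) :
    HasFDerivAt (fun z : E => ‖z‖⁻¹) (-(‖x‖ ^ 3)⁻¹ • innerSL ℝ x) x := by
  have hx' : 0 < ‖x‖ := norm_pos_iff.2 hx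
  have hnorm : HasFDerivAt (fun z : E => √(‖z‖ ^ 2))
      ((1 / (2 * √(‖x‖ ^ 2))) • (2 : ℕ) • innerSL ℝ x) x :=
    (hasStrictFDerivAt_norm_sq x).hasFDerivAt.sqrt (by positivity)
  simp only [Real.sqrt_sq (norm_nonneg _)] at hnorm
  refine ((hasDerivAt_inv hx'.ne').comp_hasFDerivAt x hnorm).congr_fderiv ?_
  rw [smul_smul, ← Nat.cast_smul_eq_nsmul ℝ, smul_smul]
  congr 1
  field_simp
  ring

theorem norm_fderiv_inv_norm_sub (hx : x ≠ y) :
    ‖fderiv ℝ (fun z : E => ‖z - y‖⁻¹) x‖ = (‖x - y‖ ^ 2)⁻¹ := by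
  have hxy : 0 < ‖x - y‖ := norm_pos_iff.2 (sub_ne_zero.2 hx)
  rw [fderiv_comp_sub y (f := fun z : E => ‖z‖⁻¹), (hasFDerivAt_inv_norm (sub_ne_zero.2 hx)).fderiv,
    norm_smul, innerSL_apply_norm, norm_neg, norm_inv, norm_pow, norm_norm]
  field_simp

theorem contDiffAt_inv_norm_sub {n : WithTop ℕ∞} (hx : x ≠ y) :
    ContDiffAt ℝ n (fun z : E => ‖z - y‖⁻¹) x :=
  ((contDiffAt_norm ℝ (sub_ne_zero.2 hx)).comp x (contDiffAt_id.sub contDiffAt_const)).inv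
    (norm_ne_zero_iff.2 (sub_ne_zero.2 hx))

theorem eventually_le_norm_fderiv_inv_norm_sub_smul_add (b : F) {g : E → F}
    (hg : ContDiffAt ℝ 1 g y) :
    ∀ᶠ x in 𝓝[≠] y, ‖b‖ / 2 * (‖x - y‖ ^ 2)⁻¹ ≤ ‖fderiv ℝ (fun z => ‖z - y‖⁻¹ • b + g z) x‖ := by
  rcases eq_or_ne b 0 with rfl | hb
  · exact Eventually.of_forall fun x => by simp
  set M := ‖fderiv ℝ g y‖ + 1
  have hbounded : ∀ᶠ x in 𝓝 y, ‖fderiv ℝ g x‖ ≤ M :=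
    ((hg.continuousAt_fderiv one_ne_zero).norm.eventually (gt_mem_nhds (lt_add_one _))).mono
      fun _ => le_of_lt
  have hdiff : ∀ᶠ x in 𝓝 y, DifferentiableAt ℝ g x :=
    (hg.eventually (by simp)).mono fun x hx => hx.differentiableAt one_ne_zero
  have hlarge : ∀ᶠ x in 𝓝[≠] y, M ≤ ‖b‖ / 2 * (‖x - y‖ ^ 2)⁻¹ :=
    ((tendsto_inv_norm_sub_sq_nhdsNE y).const_mul_atTop (by positivity)).eventually_ge_atTop M
  filter_upwards [nhdsWithin_le_nhds hbounded, nhdsWithin_le_nhds hdiff, hlarge,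
    self_mem_nhdsWithin] with x hxM hxg hxlarge (hxy : x ≠ y)
  have hinv := (contDiffAt_inv_norm_sub (n := 1) hxy).differentiableAt one_ne_zero
  rw [fderiv_fun_add (hinv.smul_const b) hxg, fderiv_smul_const hinv]
  have := norm_sub_norm_le ((fderiv ℝ (fun z => ‖z - y‖⁻¹) x).smulRight b) (-fderiv ℝ g x)
  rw [ContinuousLinearMap.norm_smulRight_apply, norm_fderiv_inv_norm_sub hxy, norm_neg,
    sub_neg_eq_add] at this
  nlinarith

end InverseNorm

section CoulombPotential

variable {ι E F : Type*} [Fintype ι] [NormedAddCommGroup E] [InnerProductSpace ℝ E]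
  [NormedAddCommGroup F] [NormedSpace ℝ F] {y : ι → E} {b : ι → F} {x : E}

/-- The factor `1 / (4π)` of the Green's function is absorbed into the charges `b k`. -/
noncomputable def coulombPotential (y : ι → E) (b : ι → F) (x : E) : F :=
  ∑ k, ‖x - y k‖⁻¹ • b k

theorem contDiffAt_coulombPotential {n : WithTop ℕ∞} (hx : ∀ k, x ≠ y k) :
    ContDiffAt ℝ n (coulombPotential y b) x :=
  ContDiffAt.sum fun k _ => (contDiffAt_inv_norm_sub (hx k)).smul contDiffAt_const

theorem eventually_le_norm_fderiv_coulombPotential [DecidableEq ι] (hy : Injective y) (j : ι) :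
    ∀ᶠ x in 𝓝[≠] y j,
      ‖b j‖ / 2 * (‖x - y j‖ ^ 2)⁻¹ ≤ ‖fderiv ℝ (coulombPotential y b) x‖ := by
  have hsplit : coulombPotential y b =
      fun z => ‖z - y j‖⁻¹ • b j + ∑ k ∈ Finset.univ.erase j, ‖z - y k‖⁻¹ • b k := by
    funext z
    exact (Finset.add_sum_erase _ _ (Finset.mem_univ j)).symm
  rw [hsplit]
  refine eventually_le_norm_fderiv_inv_norm_sub_smul_add (b j) (ContDiffAt.sum fun k hk => ?_)
  exact (contDiffAt_inv_norm_sub (hy.ne (Finset.ne_of_mem_erase hk).symm)).smul contDiffAt_const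

variable [FiniteDimensional ℝ E] [MeasurableSpace E] [BorelSpace E] [Nontrivial E]
  {μ : Measure E} [μ.IsAddHaarMeasure]

theorem eq_zero_of_memLp_norm_fderiv_coulombPotential (hdim : Module.finrank ℝ E ≤ 4) (hy : Injective y)
    (hgrad : MemLp (fun x => ‖fderiv ℝ (coulombPotential y b) x‖) 2 μ) : b = 0 := by
  classical
  funext j
  by_contra hbj
  have hb : 0 < ‖b j‖ := norm_pos_iff.2 hbj
  obtain ⟨r, hr, hlow⟩ := Metric.eventually_nhds_iff.1
    (eventually_nhdsWithin_iff.1 (eventually_le_norm_fderiv_coulombPotential (b := b) hy j))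
  have hint : IntegrableOn (fun x => ‖x - y j‖ ^ (-4 : ℝ)) (ball (y j) r) μ := by
    refine Integrable.mono' (hgrad.integrable_sq.const_mul (4 / ‖b j‖ ^ 2)).integrableOn
      ((measurable_id.sub_const _).norm.pow_const _).aestronglyMeasurable ?_
    filter_upwards [ae_restrict_mem measurableSet_ball, ae_restrict_of_ae (μ.ae_ne (y j))]
      with x hx hne
    have hbound := hlow hx hne
    have hpos : 0 < ‖x - y j‖ := norm_pos_iff.2 (sub_ne_zero.2 hne)
    calc ‖‖x - y j‖ ^ (-4 : ℝ)‖ = 4 / ‖b j‖ ^ 2 * (‖b j‖ / 2 * (‖x - y j‖ ^ 2)⁻¹) ^ 2 := by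
          rw [Real.norm_of_nonneg (by positivity), Real.rpow_neg hpos.le, Real.rpow_ofNat]
          field_simp
          ring
      _ ≤ 4 / ‖b j‖ ^ 2 * ‖fderiv ℝ (coulombPotential y b) x‖ ^ 2 := by gcongr
  have hdim' : 4 < Module.finrank ℝ E := by
    exact_mod_cast (integrableOn_ball_norm_sub_rpow_neg_iff μ (y j) hr).1 hint
  exact hdim'.not_ge hdim

end CoulombPotential

theorem point_charge_decomposition_unique_general
    (n : ℕ) (y : Fin n → EuclideanSpace ℝ (Fin 3))
    (hy : Function.Injective y) (q : Fin n → ℂ)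
    (φ : EuclideanSpace ℝ (Fin 3) → ℂ)
    (hφdiff : ∀ᵐ x ∂volume, DifferentiableAt ℝ φ x)
    (hφgrad : MemLp (fun x => ‖fderiv ℝ φ x‖) 2 volume)
    (heq : ∀ᵐ x ∂volume,
      φ x + ∑ k, q k / ((4 * π * ‖x - y k‖ : ℝ) : ℂ) = 0) :
    (∀ k, q k = 0) ∧ φ =ᵐ[volume] 0 := by
  set b : Fin n → ℂ := fun k => -(q k / (4 * π))
  have hφ : φ =ᵐ[volume] coulombPotential y b := by
    filter_upwards [heq] with x hx
    rw [eq_neg_of_add_eq_zero_left hx, coulombPotential, ← Finset.sum_neg_distrib]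
    refine Finset.sum_congr rfl fun k _ => ?_
    rw [Complex.real_smul]
    push_cast
    ring
  have hψdiff : ∀ᵐ x ∂volume, DifferentiableAt ℝ (coulombPotential y b) x := by
    filter_upwards [ae_all_iff.2 fun k => volume.ae_ne (y k)] with x hx
    exact (contDiffAt_coulombPotential (n := 1) hx).differentiableAt one_ne_zero
  have hb : b = 0 := eq_zero_of_memLp_norm_fderiv_coulombPotential (by simp) hy
    (hφgrad.ae_eq ((fderiv_ae_eq_of_ae_eq hφ hφdiff hψdiff).fun_comp norm))
  have hq : ∀ k, q k = 0 := fun k => by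
    simpa [b, Real.pi_ne_zero] using congr_fun hb k
  refine ⟨hq, ?_⟩
  filter_upwards [heq] with x hx
  simpa [hq] using hx

/-- Uniqueness of the decomposition defining the form domain of the point-interaction
Hamiltonian: if `φ` is locally integrable and a.e. differentiable with `|∇φ| ∈ L²(ℝ³)`,
`y₁,…,yₙ` are distinct points and `φ + Σ q_k G(·-y_k) = 0` a.e. with
`G(x) = 1/(4π|x|)`, then all charges `q_k` vanish and `φ = 0` a.e. -/
theorem point_charge_decomposition_unique
    (n : ℕ) (y : Fin n → EuclideanSpace ℝ (Fin 3))
    (hy : Function.Injective y) (q : Fin n → ℂ)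
    (φ : EuclideanSpace ℝ (Fin 3) → ℂ)
    (hφloc : LocallyIntegrable φ volume)
    (hφdiff : ∀ᵐ x ∂volume, DifferentiableAt ℝ φ x)
    (hφgrad : MemLp (fun x => ‖fderiv ℝ φ x‖) 2 volume)
    (heq : ∀ᵐ x ∂volume,
      φ x + ∑ k, q k / ((4 * π * ‖x - y k‖ : ℝ) : ℂ) = 0) :
    (∀ k, q k = 0) ∧ φ =ᵐ[volume] 0 :=
  point_charge_decomposition_unique_general n y hy q φ hφdiff hφgrad heq
end
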